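/- In any Nash Equilibrium of the simplified game in which the defender's budget constraint is slack (∑ m_i < B), every node i with m_i > 0 satisfies p_i = C_i^D/(r_i·w_i), equivalently μ_i(p) = 0. -/

import Mathlib

/-- Defender feasibility: `∑ m_i ≤ B` and `0 ≤ m_i ≤ 1 / w_i`. -/
def DefFeasible {N : ℕ} (w : Fin N → ℝ) (B : ℝ) (m : Fin N → ℝ) : Prop :=
  (∑ i, m i ≤ B) ∧ ∀ i, 0 ≤ m i ∧ m i ≤ 1 / w i

/-- Attacker feasibility: `∑ m_i w_i p_i ≤ M` and `p_i ∈ [0,1]`. -/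
def AtkFeasible {N : ℕ} (w : Fin N → ℝ) (M : ℝ) (m p : Fin N → ℝ) : Prop :=
  (∑ i, m i * w i * p i ≤ M) ∧ ∀ i, 0 ≤ p i ∧ p i ≤ 1

/-- Defender payoff. -/
def Ud {N : ℕ} (r w CD : Fin N → ℝ) (m p : Fin N → ℝ) : ℝ :=
  ∑ i, (m i * (p i * r i * w i - CD i) - p i * r i)

/-- Attacker payoff. -/
def Ua {N : ℕ} (r w CA : Fin N → ℝ) (m p : Fin N → ℝ) : ℝ :=
  ∑ i, p i * (r i - m i * (r i * w i + CA i))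

/-- Nash Equilibrium of the simplified game. -/
def IsNE {N : ℕ} (r w CA CD : Fin N → ℝ) (B M : ℝ) (m p : Fin N → ℝ) : Prop :=
  DefFeasible w B m ∧ AtkFeasible w M m p ∧
    (∀ m', DefFeasible w B m' → Ud r w CD m' p ≤ Ud r w CD m p) ∧
    (∀ p', AtkFeasible w M m p' → Ua r w CA m p' ≤ Ua r w CA m p)


/-!
The defender's payoff is affine in each `m i`, with slope `μ_i = p i * r i * w i - CD i`.
At a node with `m i > 0` the defender may lower `m i` to `0`, so `μ_i ≥ 0`. If `m i < 1 / w i`,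
a slack budget lets the defender raise `m i` a little, so `μ_i ≤ 0`. The remaining case
`m i = 1 / w i` is ruled out by the attacker: there the attacker's marginal payoff at `i` is
`-C_i^A / w_i < 0`, so `p i = 0` and `μ_i = -C_i^D < 0`.
-/

open Function

section UpdateSums

variable {ι R : Type*} [Fintype ι] [DecidableEq ι] [CommRing R]

lemma sum_mul_update_sub (f g : ι → R) (i : ι) (x : R) :
    ∑ j, g j * (update f i x j - f j) = g i * (x - f i) := by
  rw [Finset.sum_eq_single i (fun j _ hj ↦ by simp [update_of_ne hj]) (by simp)]
  simp

lemma sum_mul_update (f g : ι → R) (i : ι) (x : R) :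
    ∑ j, g j * update f i x j = ∑ j, g j * f j + g i * (x - f i) := by
  have := sum_mul_update_sub f g i x
  simp only [mul_sub, Finset.sum_sub_distrib] at this
  linear_combination this

lemma sum_update (f : ι → R) (i : ι) (x : R) :
    ∑ j, update f i x j = ∑ j, f j + (x - f i) := by
  simpa only [Pi.one_apply, one_mul] using sum_mul_update f 1 i x

end UpdateSums

section SimplifiedGame

variable {N : ℕ} {r w CA CD : Fin N → ℝ} {B M : ℝ} {m p : Fin N → ℝ}

lemma Ud_update_sub (i : Fin N) (x : ℝ) :
    Ud r w CD (update m i x) p - Ud r w CD m p = (x - m i) * (p i * r i * w i - CD i) := by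
  rw [Ud, Ud, ← Finset.sum_sub_distrib, mul_comm (x - m i),
    ← sum_mul_update_sub m (fun j ↦ p j * r j * w j - CD j) i x]
  exact Finset.sum_congr rfl fun j _ ↦ by ring

lemma Ua_update_sub (i : Fin N) (y : ℝ) :
    Ua r w CA m (update p i y) - Ua r w CA m p
      = (y - p i) * (r i - m i * (r i * w i + CA i)) := by
  rw [Ua, Ua, ← Finset.sum_sub_distrib, mul_comm (y - p i),
    ← sum_mul_update_sub p (fun j ↦ r j - m j * (r j * w j + CA j)) i y]
  exact Finset.sum_congr rfl fun j _ ↦ by ring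

lemma DefFeasible.update (hm : DefFeasible w B m) {i : Fin N} {x : ℝ} (hx₀ : 0 ≤ x)
    (hxw : x ≤ 1 / w i) (hxB : ∑ j, m j + (x - m i) ≤ B) :
    DefFeasible w B (update m i x) := by
  refine ⟨by rwa [sum_update], fun j ↦ ?_⟩
  rcases eq_or_ne j i with rfl | hj
  · simp only [update_self]
    exact ⟨hx₀, hxw⟩
  · simpa [update_of_ne hj] using hm.2 j

lemma AtkFeasible.update_zero (hp : AtkFeasible w M m p) {i : Fin N} (hmw : 0 ≤ m i * w i) :
    AtkFeasible w M m (update p i 0) := by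
  refine ⟨?_, fun j ↦ ?_⟩
  · rw [sum_mul_update]
    linarith [hp.1, mul_nonneg hmw (hp.2 i).1]
  rcases eq_or_ne j i with rfl | hj
  · simp
  · simpa [update_of_ne hj] using hp.2 j

lemma attack_eq_zero_of_attacker_optimal (hp : AtkFeasible w M m p)
    (hUa : ∀ p', AtkFeasible w M m p' → Ua r w CA m p' ≤ Ua r w CA m p) {i : Fin N}
    (hwi : 0 < w i) (hCAi : 0 < CA i) (hmi : m i = 1 / w i) :
    p i = 0 := by
  have hdrop := hUa _ (hp.update_zero (by rw [hmi, one_div_mul_cancel hwi.ne']; exact zero_le_one))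
  have hslope : r i - m i * (r i * w i + CA i) = -(CA i / w i) := by
    rw [hmi]
    field_simp
    ring
  rw [← sub_nonpos, Ua_update_sub, hslope] at hdrop
  nlinarith [(hp.2 i).1, div_pos hCAi hwi]

variable (hm : DefFeasible w B m)
  (hUd : ∀ m', DefFeasible w B m' → Ud r w CD m' p ≤ Ud r w CD m p)
include hm hUd

lemma gain_nonneg_of_defender_optimal {i : Fin N} (hmi : 0 < m i) :
    0 ≤ p i * r i * w i - CD i := by
  have hzero := hUd _ (hm.update le_rfl ((hm.2 i).1.trans (hm.2 i).2) (by linarith [hm.1, hmi]))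
  rw [← sub_nonpos, Ud_update_sub] at hzero
  nlinarith

lemma gain_nonpos_of_defender_optimal (hslack : ∑ j, m j < B) {i : Fin N} (hmi : m i < 1 / w i) :
    p i * r i * w i - CD i ≤ 0 := by
  set ε := min (B - ∑ j, m j) (1 / w i - m i)
  have hε : 0 < ε := lt_min (sub_pos.2 hslack) (sub_pos.2 hmi)
  have hraise := hUd _ (hm.update (x := m i + ε) (add_nonneg (hm.2 i).1 hε.le)
    (le_sub_iff_add_le'.mp (min_le_right _ _))
    (by rw [add_sub_cancel_left]; exact le_sub_iff_add_le'.mp (min_le_left _ _)))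
  rw [← sub_nonpos, Ud_update_sub] at hraise
  nlinarith

end SimplifiedGame

theorem ne_slack_budget_mu_zero_general {N : ℕ} (r w CA CD : Fin N → ℝ) (B M : ℝ)
    (hr : ∀ i, 0 < r i) (hw : ∀ i, 0 < w i) (hCA : ∀ i, 0 < CA i) (hCD : ∀ i, 0 < CD i)
    (m p : Fin N → ℝ) (hNE : IsNE r w CA CD B M m p)
    (hslack : ∑ i, m i < B) :
    ∀ i, 0 < m i → p i = CD i / (r i * w i) ∧ p i * r i * w i - CD i = 0 := by
  obtain ⟨hm, hp, hUd, hUa⟩ := hNE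
  intro i hmi
  have hgain : p i * r i * w i - CD i = 0 := by
    refine le_antisymm ?_ (gain_nonneg_of_defender_optimal hm hUd hmi)
    rcases (hm.2 i).2.lt_or_eq with hlt | heq
    · exact gain_nonpos_of_defender_optimal hm hUd hslack hlt
    · rw [attack_eq_zero_of_attacker_optimal hp hUa (hw i) (hCA i) heq]
      linarith [hCD i]
  refine ⟨?_, hgain⟩
  rw [eq_div_iff (mul_pos (hr i) (hw i)).ne']
  linarith

/-- In any Nash Equilibrium with slack defender budget (`∑ m_i < B`), every node with
`m_i > 0` satisfies `p_i = C_i^D / (r_i w_i)`, i.e. `μ_i(p) = 0`. -/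
theorem ne_slack_budget_mu_zero {N : ℕ} (r w CA CD : Fin N → ℝ) (B M : ℝ)
    (hr : ∀ i, 0 < r i) (hw : ∀ i, 0 < w i) (hCA : ∀ i, 0 < CA i) (hCD : ∀ i, 0 < CD i)
    (hCDr : ∀ i, CD i ≤ r i * w i) (hB : 0 < B) (hM : 0 < M)
    (m p : Fin N → ℝ) (hNE : IsNE r w CA CD B M m p)
    (hslack : ∑ i, m i < B) :
    ∀ i, 0 < m i → p i = CD i / (r i * w i) ∧ p i * r i * w i - CD i = 0 :=
  ne_slack_budget_mu_zero_general r w CA CD B M hr hw hCA hCD m p hNE hslack
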